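/- arXiv:1107.1809 — 5 statements merged into one kernel-verified Lean document; each statement's English description precedes it below -/
import Mathlib

section
/- Let T : ℂ[z_1,…,z_n] → ℂ[[z_1,…,z_m]] be linear with symbol G_T(z,w) = ∑_α T(z^α) w^α/α!. If G_T(z,w) ∈ F_{β⊕γ}, then for every α ∈ (0,∞)^n with α_j ≤ 1/γ_j for all j, T defines a bounded operator T : F_α → F_β with ‖T(f)‖_β ≤ ‖G_T(z, αw)‖_{β⊕α} · ‖f‖_α. -/
open scoped BigOperators
open Complex

noncomputable section

def ffact {k : ℕ} (σ : Fin k →₀ ℕ) : ℝ := ∏ i, (Nat.factorial (σ i) : ℝ)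
def fwpow {k : ℕ} (β : Fin k → ℝ) (σ : Fin k →₀ ℕ) : ℝ := ∏ i, β i ^ σ i

/-!
The `κ`-th coefficient of `T f` is `∑_η a_η η! G(κ, η)`, so `T` is the matrix operator with
entries `η! G(κ, η)` from `F_α = ℓ²(η!/α^η)` to `F_β = ℓ²(κ!/β^κ)`. Cauchy–Schwarz in `η` bounds
each coefficient, and summing over `κ` bounds the operator norm by the Hilbert–Schmidt norm of
the matrix, which is exactly `‖G_T(z, αw)‖_{β⊕α}`. It is finite because `α^η ≤ γ^{-η}`, so the
weights of `F_{β⊕α}` applied to `G_T(z, αw)` are dominated by those of `F_{β⊕γ}` applied to `G_T`.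
-/

lemma ffact_pos {k : ℕ} (σ : Fin k →₀ ℕ) : 0 < ffact σ :=
  Finset.prod_pos fun _ _ => Nat.cast_pos.mpr (Nat.factorial_pos _)

lemma fwpow_pos {k : ℕ} {β : Fin k → ℝ} (hβ : ∀ i, 0 < β i) (σ : Fin k →₀ ℕ) :
    0 < fwpow β σ :=
  Finset.prod_pos fun i _ => pow_pos (hβ i) _

lemma fwpow_le_inv_fwpow {k : ℕ} {α γ : Fin k → ℝ} (hα : ∀ i, 0 ≤ α i)
    (hαγ : ∀ i, α i ≤ (γ i)⁻¹) (σ : Fin k →₀ ℕ) : fwpow α σ ≤ (fwpow γ σ)⁻¹ := by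
  rw [fwpow, fwpow, ← Finset.prod_inv_distrib]
  refine Finset.prod_le_prod (fun i _ => pow_nonneg (hα i) _) fun i _ => ?_
  rw [← inv_pow]
  exact pow_le_pow_left₀ (hα i) (hαγ i) _

theorem summable_and_sq_tsum_le_of_sq_le_mul {ι : Type*} {r f g : ι → ℝ}
    (hf : ∀ i, 0 ≤ f i) (hg : ∀ i, 0 ≤ g i) (hr : ∀ i, r i ^ 2 ≤ f i * g i)
    (hf_sum : Summable f) (hg_sum : Summable g) :
    Summable r ∧ (∑' i, r i) ^ 2 ≤ (∑' i, f i) * ∑' i, g i := by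
  have hr_sum : Summable r := by
    refine ((hf_sum.add hg_sum).div_const 2).of_norm_bounded fun i => ?_
    have h := two_mul_le_add_of_sq_le_mul (hf i) (hg i) ((sq_abs (r i)).trans_le (hr i))
    rw [Real.norm_eq_abs]
    linarith
  refine ⟨hr_sum, le_of_tendsto' (hr_sum.hasSum.pow 2) fun s => ?_⟩
  calc (∑ i ∈ s, r i) ^ 2 ≤ (∑ i ∈ s, f i) * ∑ i ∈ s, g i :=
        Finset.sum_sq_le_sum_mul_sum_of_sq_le_mul s (fun i _ => hf i) (fun i _ => hg i)
          fun i _ => hr i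
    _ ≤ (∑' i, f i) * ∑' i, g i :=
        mul_le_mul (hf_sum.sum_le_tsum s fun i _ => hf i) (hg_sum.sum_le_tsum s fun i _ => hg i)
          (Finset.sum_nonneg fun i _ => hg i) (tsum_nonneg hf)

lemma div_mul_inv_div_mul_norm_sq {x y B s : ℝ} (hy : y ≠ 0) (hs : s ≠ 0) (z : ℂ) :
    x / B * ((y / s)⁻¹ * ‖z * y‖ ^ 2) = x * y / (B * s) * ‖z * s‖ ^ 2 := by
  rw [norm_mul, norm_mul, norm_real, norm_real, Real.norm_eq_abs, Real.norm_eq_abs]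
  field_simp
  rw [sq_abs, sq_abs]
  ring

lemma div_mul_norm_mul_sq_le {x B s t : ℝ} (hx : 0 ≤ x) (hB : 0 < B) (hs : 0 < s)
    (hst : s ≤ t⁻¹) (z : ℂ) : x / (B * s) * ‖z * s‖ ^ 2 ≤ x / (B * t) * ‖z‖ ^ 2 := by
  have ht : 0 < t := inv_pos.mp (hs.trans_le hst)
  calc x / (B * s) * ‖z * s‖ ^ 2 = x / B * s * ‖z‖ ^ 2 := by
        rw [norm_mul, norm_real, Real.norm_of_nonneg hs.le]; field_simp
    _ ≤ x / B * t⁻¹ * ‖z‖ ^ 2 := by gcongr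
    _ = x / (B * t) * ‖z‖ ^ 2 := by field_simp

section WeightedMatrix

variable {ι κ R : Type*} [NormedRing R] {v : ι → ℝ} {a : ι → R}

theorem summable_norm_mul_and_sq_tsum_le {b : ι → R} (hv : ∀ i, 0 < v i)
    (ha : Summable fun i => v i * ‖a i‖ ^ 2) (hb : Summable fun i => (v i)⁻¹ * ‖b i‖ ^ 2) :
    Summable (fun i => ‖a i * b i‖) ∧
      (∑' i, ‖a i * b i‖) ^ 2 ≤ (∑' i, v i * ‖a i‖ ^ 2) * ∑' i, (v i)⁻¹ * ‖b i‖ ^ 2 := by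
  refine summable_and_sq_tsum_le_of_sq_le_mul (fun i => by have := hv i; positivity)
    (fun i => by have := hv i; positivity) (fun i => ?_) ha hb
  calc ‖a i * b i‖ ^ 2 ≤ (‖a i‖ * ‖b i‖) ^ 2 := by gcongr; exact norm_mul_le _ _
    _ = v i * ‖a i‖ ^ 2 * ((v i)⁻¹ * ‖b i‖ ^ 2) := by field_simp [(hv i).ne']

theorem summable_and_tsum_sq_le_hilbertSchmidt [CompleteSpace R] {u : κ → ℝ} {c : κ → ι → R}
    (hu : ∀ k, 0 < u k) (hv : ∀ i, 0 < v i)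
    (hc : Summable fun p : κ × ι => u p.1 * ((v p.2)⁻¹ * ‖c p.1 p.2‖ ^ 2))
    (ha : Summable fun i => v i * ‖a i‖ ^ 2) :
    (∀ k, Summable fun i => a i * c k i) ∧
      Summable (fun k => u k * ‖∑' i, a i * c k i‖ ^ 2) ∧
      ∑' k, u k * ‖∑' i, a i * c k i‖ ^ 2 ≤
        (∑' p : κ × ι, u p.1 * ((v p.2)⁻¹ * ‖c p.1 p.2‖ ^ 2)) * ∑' i, v i * ‖a i‖ ^ 2 := by
  set A := ∑' i, v i * ‖a i‖ ^ 2
  have hc_nonneg : 0 ≤ fun p : κ × ι => u p.1 * ((v p.2)⁻¹ * ‖c p.1 p.2‖ ^ 2) := fun p => by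
    have := hu p.1; have := hv p.2; positivity
  obtain ⟨hc_row, hc_rows⟩ := (summable_prod_of_nonneg hc_nonneg).mp hc
  have hc_row' : ∀ k, Summable fun i => (v i)⁻¹ * ‖c k i‖ ^ 2 := fun k =>
    (summable_mul_left_iff (hu k).ne').mp (hc_row k)
  have hrow_bound : ∀ k, u k * ‖∑' i, a i * c k i‖ ^ 2 ≤
      A * ∑' i, u k * ((v i)⁻¹ * ‖c k i‖ ^ 2) := fun k => by
    obtain ⟨hsum, hsq⟩ := summable_norm_mul_and_sq_tsum_le hv ha (hc_row' k)
    calc u k * ‖∑' i, a i * c k i‖ ^ 2 ≤ u k * (∑' i, ‖a i * c k i‖) ^ 2 := by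
          gcongr
          · exact (hu k).le
          · exact norm_tsum_le_tsum_norm hsum
      _ ≤ u k * (A * ∑' i, (v i)⁻¹ * ‖c k i‖ ^ 2) := by gcongr; exact (hu k).le
      _ = A * ∑' i, u k * ((v i)⁻¹ * ‖c k i‖ ^ 2) := by rw [tsum_mul_left]; ring
  have hsummable : Summable fun k => u k * ‖∑' i, a i * c k i‖ ^ 2 :=
    (hc_rows.mul_left A).of_nonneg_of_le (fun k => by have := hu k; positivity) hrow_bound
  refine ⟨fun k => ?_, hsummable, ?_⟩
  · exact ((summable_norm_mul_and_sq_tsum_le hv ha (hc_row' k)).1).of_norm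
  · calc ∑' k, u k * ‖∑' i, a i * c k i‖ ^ 2
        ≤ ∑' k, A * ∑' i, u k * ((v i)⁻¹ * ‖c k i‖ ^ 2) :=
          hsummable.tsum_le_tsum hrow_bound (hc_rows.mul_left A)
      _ = _ := by rw [tsum_mul_left, hc.tsum_prod' hc_row, mul_comm]

end WeightedMatrix

theorem stmt_6_general {n m : ℕ} (β : Fin m → ℝ) (γ : Fin n → ℝ)
    (hβ : ∀ i, 0 < β i)
    (T : MvPolynomial (Fin n) ℂ →ₗ[ℂ] MvPowerSeries (Fin m) ℂ)
    (G : (Fin m →₀ ℕ) × (Fin n →₀ ℕ) → ℂ)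
    (hG : ∀ p, G p =
      MvPowerSeries.coeff p.1 (T (MvPolynomial.monomial p.2 1)) / (ffact p.2 : ℂ))
    (hGmem : Summable fun p : (Fin m →₀ ℕ) × (Fin n →₀ ℕ) =>
      (ffact p.1 * ffact p.2 / (fwpow β p.1 * fwpow γ p.2)) * ‖G p‖ ^ 2)
    (α : Fin n → ℝ) (hα : ∀ j, 0 < α j) (hαγ : ∀ j, α j ≤ (γ j)⁻¹)
    (a : (Fin n →₀ ℕ) → ℂ)
    (ha : Summable fun η => (ffact η / fwpow α η) * ‖a η‖ ^ 2) :
    (∀ κ : Fin m →₀ ℕ, Summable fun η =>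
      a η * MvPowerSeries.coeff κ (T (MvPolynomial.monomial η 1))) ∧
    Summable (fun κ => (ffact κ / fwpow β κ) *
      ‖∑' η, a η * MvPowerSeries.coeff κ (T (MvPolynomial.monomial η 1))‖ ^ 2) ∧
    Real.sqrt (∑' κ, (ffact κ / fwpow β κ) *
        ‖∑' η, a η * MvPowerSeries.coeff κ (T (MvPolynomial.monomial η 1))‖ ^ 2) ≤
      Real.sqrt (∑' p : (Fin m →₀ ℕ) × (Fin n →₀ ℕ),
          (ffact p.1 * ffact p.2 / (fwpow β p.1 * fwpow α p.2)) *
            ‖G p * (fwpow α p.2 : ℂ)‖ ^ 2) *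
        Real.sqrt (∑' η, (ffact η / fwpow α η) * ‖a η‖ ^ 2) := by
  have hcoeff : ∀ p : (Fin m →₀ ℕ) × (Fin n →₀ ℕ),
      MvPowerSeries.coeff p.1 (T (MvPolynomial.monomial p.2 1)) = G p * (ffact p.2 : ℂ) :=
    fun p => by rw [hG, div_mul_cancel₀ _ (by exact_mod_cast (ffact_pos p.2).ne')]
  have hterm : ∀ p : (Fin m →₀ ℕ) × (Fin n →₀ ℕ),
      ffact p.1 / fwpow β p.1 * ((ffact p.2 / fwpow α p.2)⁻¹ *
          ‖MvPowerSeries.coeff p.1 (T (MvPolynomial.monomial p.2 1))‖ ^ 2) =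
        ffact p.1 * ffact p.2 / (fwpow β p.1 * fwpow α p.2) * ‖G p * (fwpow α p.2 : ℂ)‖ ^ 2 :=
    fun p => by
      rw [hcoeff, div_mul_inv_div_mul_norm_sq (ffact_pos p.2).ne' (fwpow_pos hα p.2).ne']
  have hnonneg : ∀ p : (Fin m →₀ ℕ) × (Fin n →₀ ℕ),
      0 ≤ ffact p.1 * ffact p.2 / (fwpow β p.1 * fwpow α p.2) * ‖G p * (fwpow α p.2 : ℂ)‖ ^ 2 :=
    fun p => by
      have := ffact_pos p.1; have := ffact_pos p.2
      have := fwpow_pos hβ p.1; have := fwpow_pos hα p.2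
      positivity
  have hsummable := hGmem.of_nonneg_of_le hnonneg fun p =>
    div_mul_norm_mul_sq_le (mul_pos (ffact_pos p.1) (ffact_pos p.2)).le (fwpow_pos hβ p.1)
      (fwpow_pos hα p.2) (fwpow_le_inv_fwpow (fun j => (hα j).le) hαγ p.2) (G p)
  obtain ⟨hTf, hTf_sum, hTf_le⟩ := summable_and_tsum_sq_le_hilbertSchmidt
    (u := fun κ => ffact κ / fwpow β κ) (v := fun η => ffact η / fwpow α η)
    (c := fun κ η => MvPowerSeries.coeff κ (T (MvPolynomial.monomial η 1)))
    (fun κ => div_pos (ffact_pos κ) (fwpow_pos hβ κ))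
    (fun η => div_pos (ffact_pos η) (fwpow_pos hα η))
    (hsummable.congr fun p => (hterm p).symm) ha
  refine ⟨hTf, hTf_sum, ?_⟩
  rw [← Real.sqrt_mul (tsum_nonneg hnonneg), ← tsum_congr hterm]
  exact Real.sqrt_le_sqrt hTf_le

/-- Let `T : ℂ[z₁,…,zₙ] → ℂ[[z₁,…,z_m]]` be linear with symbol
`G_T(z,w) = ∑_η T(z^η) w^η/η!`.  If `G_T ∈ F_{β⊕γ}`, then for every `α` with
`0 < α_j ≤ 1/γ_j`, `T` defines a bounded operator `F_α → F_β`: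
for `f = ∑ a_η z^η ∈ F_α` the coefficientwise sums defining `T(f)` converge,
`T(f) ∈ F_β`, and `‖T(f)‖_β ≤ ‖G_T(z,αw)‖_{β⊕α} ‖f‖_α`. -/
theorem stmt_6 {n m : ℕ} (β : Fin m → ℝ) (γ : Fin n → ℝ)
    (hβ : ∀ i, 0 < β i) (hγ : ∀ i, 0 < γ i)
    (T : MvPolynomial (Fin n) ℂ →ₗ[ℂ] MvPowerSeries (Fin m) ℂ)
    (G : (Fin m →₀ ℕ) × (Fin n →₀ ℕ) → ℂ)
    (hG : ∀ p, G p =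
      MvPowerSeries.coeff p.1 (T (MvPolynomial.monomial p.2 1)) / (ffact p.2 : ℂ))
    (hGmem : Summable fun p : (Fin m →₀ ℕ) × (Fin n →₀ ℕ) =>
      (ffact p.1 * ffact p.2 / (fwpow β p.1 * fwpow γ p.2)) * ‖G p‖ ^ 2)
    (α : Fin n → ℝ) (hα : ∀ j, 0 < α j) (hαγ : ∀ j, α j ≤ (γ j)⁻¹)
    (a : (Fin n →₀ ℕ) → ℂ)
    (ha : Summable fun η => (ffact η / fwpow α η) * ‖a η‖ ^ 2) :
    (∀ κ : Fin m →₀ ℕ, Summable fun η =>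
      a η * MvPowerSeries.coeff κ (T (MvPolynomial.monomial η 1))) ∧
    Summable (fun κ => (ffact κ / fwpow β κ) *
      ‖∑' η, a η * MvPowerSeries.coeff κ (T (MvPolynomial.monomial η 1))‖ ^ 2) ∧
    Real.sqrt (∑' κ, (ffact κ / fwpow β κ) *
        ‖∑' η, a η * MvPowerSeries.coeff κ (T (MvPolynomial.monomial η 1))‖ ^ 2) ≤
      Real.sqrt (∑' p : (Fin m →₀ ℕ) × (Fin n →₀ ℕ),
          (ffact p.1 * ffact p.2 / (fwpow β p.1 * fwpow α p.2)) *
            ‖G p * (fwpow α p.2 : ℂ)‖ ^ 2) *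
        Real.sqrt (∑' η, (ffact η / fwpow α η) * ‖a η‖ ^ 2) :=
  stmt_6_general β γ hβ T G hG hGmem α hα hαγ a ha
end
end

section
/- If T : F_α → F_β is a bounded linear operator, then its symbol satisfies G_T(z,w) ∈ F_{β⊕γ} for every γ ∈ (0,∞)^n with γ_j > 1/α_j for all j; more precisely ‖G_T(z, α w)‖²_{β⊕α'} ≤ ‖T‖² ∏_{j=1}^n α'_j/(α'_j − α_j) for every α' ≫ α. -/
open scoped BigOperators ENNReal
open Complex

noncomputable section

def mfact {n : ℕ} (α : Fin n → ℕ) : ℝ := ∏ i, (Nat.factorial (α i) : ℝ)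
def wpow {n : ℕ} (β : Fin n → ℝ) (α : Fin n → ℕ) : ℝ := ∏ i, β i ^ α i

/-- The weighted Bargmann–Fock space `F_β` modelled as `ℓ²` over multi-indices,
an element `u` representing the entire function `∑_α u_α √(β^α/α!) z^α`. -/
abbrev Fock (n : ℕ) : Type := lp (fun _ : (Fin n → ℕ) => ℂ) 2

/-- The monomial `z^η` as an element of `F_α`: its normalized coordinate vector. -/
def monElt {n : ℕ} (α : Fin n → ℝ) (η : Fin n → ℕ) : Fock n :=
  (Real.sqrt (mfact η / wpow α η) : ℂ) • lp.single 2 η (1 : ℂ)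

/-- The Taylor coefficient at `z^κ ⊗ w^η` of the symbol `G_T(z,w) = ∑_η T(z^η) w^η/η!`
of a bounded operator `T : F_α → F_β`. -/
def symbCoeff {n m : ℕ} (α : Fin n → ℝ) (β : Fin m → ℝ)
    (T : Fock n →L[ℂ] Fock m) (p : (Fin m → ℕ) × (Fin n → ℕ)) : ℂ :=
  (Real.sqrt (wpow β p.1 / mfact p.1) : ℂ) * (T (monElt α p.2) : ∀ _, ℂ) p.1 /
    (mfact p.2 : ℂ)

/-! The `η`-th column of the coefficient matrix of `G_T` is `T z^η`, and `‖z^η‖²_α = η!/α^η`.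
With the weights of the statement, the squared `ℓ²`-norm of that column is therefore at most
`‖T‖² ∏ⱼ rⱼ^ηⱼ`, where `r = (αγ)⁻¹`, resp. `r = α/α'`, has entries in `[0, 1)`; summing over `η`
gives the product of geometric series `‖T‖² ∏ⱼ (1 - rⱼ)⁻¹`. -/

lemma mfact_pos {n : ℕ} (η : Fin n → ℕ) : 0 < mfact η :=
  Finset.prod_pos fun i _ => mod_cast Nat.factorial_pos (η i)

lemma wpow_pos {n : ℕ} {β : Fin n → ℝ} (hβ : ∀ i, 0 < β i) (η : Fin n → ℕ) :
    0 < wpow β η :=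
  Finset.prod_pos fun i _ => pow_pos (hβ i) _

lemma wpow_mul {n : ℕ} (β γ : Fin n → ℝ) (η : Fin n → ℕ) :
    wpow (β * γ) η = wpow β η * wpow γ η := by
  simp only [wpow, Pi.mul_apply, mul_pow, Finset.prod_mul_distrib]

lemma wpow_inv {n : ℕ} (β : Fin n → ℝ) (η : Fin n → ℕ) :
    wpow β⁻¹ η = (wpow β η)⁻¹ := by
  simp only [wpow, Pi.inv_apply, inv_pow, Finset.prod_inv_distrib]

lemma wpow_div {n : ℕ} (β γ : Fin n → ℝ) (η : Fin n → ℕ) :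
    wpow (β / γ) η = wpow β η / wpow γ η := by
  simp only [wpow, Pi.div_apply, div_pow, Finset.prod_div_distrib]

theorem hasSum_pi_prod_of_nonneg {β : Type*} {n : ℕ} {f : Fin n → β → ℝ} {s : Fin n → ℝ}
    (hf : ∀ i, 0 ≤ f i) (hs : ∀ i, HasSum (f i) (s i)) :
    HasSum (fun x : Fin n → β => ∏ i, f i (x i)) (∏ i, s i) := by
  induction n with
  | zero => simp
  | succ n ih =>
    have htail : HasSum (fun x : Fin n → β => ∏ i : Fin n, f i.succ (x i))
        (∏ i : Fin n, s i.succ) :=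
      ih (fun i => hf i.succ) (fun i => hs i.succ)
    have htail_nonneg : 0 ≤ fun x : Fin n → β => ∏ i : Fin n, f i.succ (x i) :=
      fun x => Finset.prod_nonneg fun i _ => hf i.succ (x i)
    have hsummable := (hs 0).summable.mul_of_nonneg htail.summable (hf 0) htail_nonneg
    have hmul := HasSum.mul (hs 0) htail hsummable
    rw [← (Fin.consEquiv fun _ => β).hasSum_iff]
    simpa [Function.comp_def, Fin.consEquiv, Fin.prod_univ_succ] using hmul

theorem hasSum_wpow {n : ℕ} {r : Fin n → ℝ} (hr0 : 0 ≤ r) (hr1 : ∀ j, r j < 1) :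
    HasSum (wpow r) (∏ j, (1 - r j)⁻¹) :=
  hasSum_pi_prod_of_nonneg (fun j k => pow_nonneg (hr0 j) k)
    fun j => hasSum_geometric_of_lt_one (hr0 j) (hr1 j)

theorem lp.summable_and_tsum_weighted_norm_apply_sq_le {ι κ : Type*} {E : κ → Type*}
    [∀ k, NormedAddCommGroup (E k)] (u : ι → lp E 2) {c b : ι → ℝ} {B : ℝ}
    (hc : 0 ≤ c) (hb : HasSum b B) (hcb : ∀ i, c i * ‖u i‖ ^ 2 ≤ b i) :
    Summable (fun p : κ × ι => c p.2 * ‖u p.2 p.1‖ ^ 2) ∧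
      ∑' p : κ × ι, c p.2 * ‖u p.2 p.1‖ ^ 2 ≤ B := by
  set F : ι × κ → ℝ := fun q => c q.1 * ‖u q.1 q.2‖ ^ 2
  have hF : 0 ≤ F := fun q => mul_nonneg (hc q.1) (sq_nonneg _)
  have hfiber (i : ι) : HasSum (fun k => F (i, k)) (c i * ‖u i‖ ^ 2) := by
    simpa using (lp.hasSum_norm (p := 2) (by norm_num) (u i)).mul_left (c i)
  have hfiber_le (i : ι) : ∑' k, F (i, k) ≤ b i := (hfiber i).tsum_eq ▸ hcb i
  have hF_summable : Summable F :=
    (summable_prod_of_nonneg hF).2 ⟨fun i => (hfiber i).summable,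
      hb.summable.of_nonneg_of_le (fun i => tsum_nonneg fun k => hF _) hfiber_le⟩
  refine ⟨hF_summable.prod_symm, ?_⟩
  calc ∑' p : κ × ι, c p.2 * ‖u p.2 p.1‖ ^ 2 = ∑' q, F q :=
        (Equiv.prodComm κ ι).tsum_eq F
    _ = ∑' i, ∑' k, F (i, k) := hF_summable.tsum_prod
    _ ≤ ∑' i, b i := hF_summable.prod.tsum_le_tsum hfiber_le hb.summable
    _ = B := hb.tsum_eq

lemma norm_monElt_sq {n : ℕ} {α : Fin n → ℝ} (hα : ∀ j, 0 < α j) (η : Fin n → ℕ) :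
    ‖monElt α η‖ ^ 2 = mfact η / wpow α η := by
  rw [monElt, norm_smul, lp.norm_single (by norm_num), norm_one, mul_one, Complex.norm_real,
    Real.norm_of_nonneg (Real.sqrt_nonneg _),
    Real.sq_sqrt (div_pos (mfact_pos η) (wpow_pos hα η)).le]

theorem summable_and_tsum_weighted_norm_apply_monElt_sq_le {n m : ℕ} {α : Fin n → ℝ}
    (hα : ∀ j, 0 < α j) (T : Fock n →L[ℂ] Fock m) {r : Fin n → ℝ} (hr0 : 0 ≤ r)
    (hr1 : ∀ j, r j < 1) {c : (Fin n → ℕ) → ℝ} (hc : 0 ≤ c)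
    (hcr : ∀ η, c η * (mfact η / wpow α η) = wpow r η) :
    Summable (fun p : (Fin m → ℕ) × (Fin n → ℕ) => c p.2 * ‖T (monElt α p.2) p.1‖ ^ 2) ∧
      ∑' p : (Fin m → ℕ) × (Fin n → ℕ), c p.2 * ‖T (monElt α p.2) p.1‖ ^ 2 ≤
        ‖T‖ ^ 2 * ∏ j, (1 - r j)⁻¹ := by
  refine lp.summable_and_tsum_weighted_norm_apply_sq_le (fun η => T (monElt α η)) hc
    ((hasSum_wpow hr0 hr1).mul_left (‖T‖ ^ 2)) fun η => ?_
  calc c η * ‖T (monElt α η)‖ ^ 2 ≤ c η * (‖T‖ * ‖monElt α η‖) ^ 2 := by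
        have := T.le_opNorm (monElt α η)
        gcongr
        exact hc η
    _ = ‖T‖ ^ 2 * wpow r η := by rw [mul_pow, norm_monElt_sq hα, ← hcr]; ring

lemma weight_mul_norm_symbCoeff_sq {n m : ℕ} (α : Fin n → ℝ) {β : Fin m → ℝ}
    (hβ : ∀ i, 0 < β i) (γ : Fin n → ℝ) (T : Fock n →L[ℂ] Fock m)
    (p : (Fin m → ℕ) × (Fin n → ℕ)) :
    mfact p.1 * mfact p.2 / (wpow β p.1 * wpow γ p.2) * ‖symbCoeff α β T p‖ ^ 2 =
      (wpow γ p.2 * mfact p.2)⁻¹ * ‖T (monElt α p.2) p.1‖ ^ 2 := by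
  have hκ := mfact_pos p.1
  have hη := mfact_pos p.2
  have hβκ := wpow_pos hβ p.1
  rw [symbCoeff, norm_div, norm_mul, Complex.norm_real, Complex.norm_real,
    Real.norm_of_nonneg (Real.sqrt_nonneg _), Real.norm_of_nonneg hη.le, div_pow, mul_pow,
    Real.sq_sqrt (div_pos hβκ hκ).le]
  field_simp

theorem summable_weight_mul_norm_symbCoeff_sq {n m : ℕ} {α : Fin n → ℝ} {β : Fin m → ℝ}
    (hα : ∀ j, 0 < α j) (hβ : ∀ i, 0 < β i) (T : Fock n →L[ℂ] Fock m) {γ : Fin n → ℝ}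
    (hγ : ∀ j, (α j)⁻¹ < γ j) :
    Summable fun p : (Fin m → ℕ) × (Fin n → ℕ) =>
      (mfact p.1 * mfact p.2 / (wpow β p.1 * wpow γ p.2)) * ‖symbCoeff α β T p‖ ^ 2 := by
  have hγ₀ (j : Fin n) : 0 < γ j := (inv_pos.2 (hα j)).trans (hγ j)
  have hαγ (j : Fin n) : 1 < α j * γ j := by
    simpa [hα j] using (inv_lt_iff_one_lt_mul₀' (hα j)).1 (hγ j)
  simp_rw [weight_mul_norm_symbCoeff_sq α hβ γ T]
  refine (summable_and_tsum_weighted_norm_apply_monElt_sq_le hα T (r := (α * γ)⁻¹)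
    (fun j => (inv_pos.2 (mul_pos (hα j) (hγ₀ j))).le) (fun j => inv_lt_one_of_one_lt₀ (hαγ j))
    (fun η => (inv_pos.2 (mul_pos (wpow_pos hγ₀ η) (mfact_pos η))).le) fun η => ?_).1
  have := mfact_pos η
  have := wpow_pos hα η
  have := wpow_pos hγ₀ η
  rw [wpow_inv, wpow_mul]
  field_simp

theorem tsum_weight_mul_norm_symbCoeff_mul_wpow_sq_le {n m : ℕ} {α : Fin n → ℝ}
    {β : Fin m → ℝ} (hα : ∀ j, 0 < α j) (hβ : ∀ i, 0 < β i) (T : Fock n →L[ℂ] Fock m)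
    {α' : Fin n → ℝ} (hα' : ∀ j, α j < α' j) :
    ∑' p : (Fin m → ℕ) × (Fin n → ℕ),
        (mfact p.1 * mfact p.2 / (wpow β p.1 * wpow α' p.2)) *
          ‖symbCoeff α β T p * (wpow α p.2 : ℂ)‖ ^ 2 ≤
      ‖T‖ ^ 2 * ∏ j, α' j / (α' j - α j) := by
  have hα'₀ (j : Fin n) : 0 < α' j := (hα j).trans (hα' j)
  have hsummand (p : (Fin m → ℕ) × (Fin n → ℕ)) :
      mfact p.1 * mfact p.2 / (wpow β p.1 * wpow α' p.2) *
          ‖symbCoeff α β T p * (wpow α p.2 : ℂ)‖ ^ 2 =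
        wpow α p.2 ^ 2 / (wpow α' p.2 * mfact p.2) * ‖T (monElt α p.2) p.1‖ ^ 2 := by
    calc _ = mfact p.1 * mfact p.2 / (wpow β p.1 * wpow α' p.2) * ‖symbCoeff α β T p‖ ^ 2 *
          wpow α p.2 ^ 2 := by
          rw [norm_mul, Complex.norm_real, Real.norm_eq_abs, mul_pow, sq_abs]; ring
      _ = _ := by rw [weight_mul_norm_symbCoeff_sq α hβ α' T]; ring
  have hfactor (j : Fin n) : (1 - (α / α') j)⁻¹ = α' j / (α' j - α j) := by
    have := (hα'₀ j).ne'
    have := (sub_pos.2 (hα' j)).ne'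
    rw [Pi.div_apply]
    field_simp
  simp_rw [hsummand, ← hfactor]
  refine (summable_and_tsum_weighted_norm_apply_monElt_sq_le hα T (r := α / α')
    (fun j => (div_pos (hα j) (hα'₀ j)).le) (fun j => (div_lt_one (hα'₀ j)).2 (hα' j))
    (fun η => (div_pos (pow_pos (wpow_pos hα η) 2)
      (mul_pos (wpow_pos hα'₀ η) (mfact_pos η))).le) fun η => ?_).2
  have := mfact_pos η
  have := wpow_pos hα η
  have := wpow_pos hα'₀ η
  rw [wpow_div]
  field_simp

/-- If `T : F_α → F_β` is bounded, then `G_T(z,w) ∈ F_{β⊕γ}` for all `γ ≫ α⁻¹`;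
more precisely `‖G_T(z,αw)‖²_{β⊕α'} ≤ ‖T‖² ∏ α'_j/(α'_j-α_j)` for all `α' ≫ α`. -/
theorem stmt_8 {n m : ℕ} (α : Fin n → ℝ) (β : Fin m → ℝ)
    (hα : ∀ j, 0 < α j) (hβ : ∀ i, 0 < β i)
    (T : Fock n →L[ℂ] Fock m) :
    (∀ γ : Fin n → ℝ, (∀ j, (α j)⁻¹ < γ j) →
      Summable fun p : (Fin m → ℕ) × (Fin n → ℕ) =>
        (mfact p.1 * mfact p.2 / (wpow β p.1 * wpow γ p.2)) *
          ‖symbCoeff α β T p‖ ^ 2) ∧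
    (∀ α' : Fin n → ℝ, (∀ j, α j < α' j) →
      ∑' p : (Fin m → ℕ) × (Fin n → ℕ),
          (mfact p.1 * mfact p.2 / (wpow β p.1 * wpow α' p.2)) *
            ‖symbCoeff α β T p * (wpow α p.2 : ℂ)‖ ^ 2 ≤
        ‖T‖ ^ 2 * ∏ j, α' j / (α' j - α j)) :=
  ⟨fun _ hγ => summable_weight_mul_norm_symbCoeff_sq hα hβ T hγ,
    fun _ hα' => tsum_weight_mul_norm_symbCoeff_mul_wpow_sq_le hα hβ T hα'⟩
end
end

section
/- Let μ = (δ_a + δ_b)/2 with a, b ∈ ℂ. Its Fourier–Laplace transform satisfies μ̂(z) = exp(((a+b)/2) z) · cosh(((a−b)/2) z). Moreover, μ̂ is nonvanishing on the open right half-plane {Re z > 0} and is a locally uniform limit of polynomials nonvanishing on the open right half-plane if and only if a − b ∈ ℝ and Re(a+b) ≥ 0. -/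
open Complex Filter

noncomputable section

/-- The Lee–Yang class `LY₁(ℂ)`: locally uniform limits of polynomials
nonvanishing on the open right half-plane. -/
def InLY (f : ℂ → ℂ) : Prop :=
  ∃ P : ℕ → Polynomial ℂ,
    (∀ k : ℕ, ∀ z : ℂ, 0 < z.re → (P k).eval z ≠ 0) ∧
    TendstoLocallyUniformly (fun k : ℕ => fun z : ℂ => (P k).eval z) f atTop

/-!
Writing `μ̂(z) = e^{bz} (e^{(a-b)z} + 1) / 2`, `μ̂` vanishes somewhere in `Re z > 0` exactly
when `(a - b) z = ±πi` has a solution there, i.e. when `a - b ∉ ℝ`.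

A polynomial without zeros in `Re z > 0` satisfies `|P(-x)| ≤ |P(x)|` for real `x ≥ 0`, since
`-x` is no closer than `x` to any root; this passes to locally uniform limits, and as
`μ̂(-1) = e^{-(a+b)} μ̂(1)` it forces `Re(a + b) ≥ 0`.

Conversely `μ̂` is the locally uniform limit of `((1 + az/n)^n + (1 + bz/n)^n) / 2`. If
`a - b = t` is real, a zero `u^n = -v^n` with `u = n + az`, `v = n + bz` gives `|u| = |v|`,
whereas `|u|² - |v|² = t Re(z̄(u + v))` and `Re(z̄(u + v)) = 2n Re z + Re(a + b)|z|² > 0`;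
so `t = 0`, `u = v = 0`, which is absurd.
-/

open Polynomial ComplexConjugate

theorem norm_pow_sub_pow_le {R : Type*} [SeminormedCommRing R] [NormOneClass R] {x y : R}
    {M : ℝ} (hx : ‖x‖ ≤ M) (hy : ‖y‖ ≤ M) (n : ℕ) :
    ‖x ^ n - y ^ n‖ ≤ n * M ^ (n - 1) * ‖x - y‖ := by
  rw [← geom_sum₂_mul]
  refine (norm_mul_le _ _).trans (mul_le_mul_of_nonneg_right ?_ (norm_nonneg _))
  have hM : 0 ≤ M := (norm_nonneg x).trans hx
  calc ‖∑ i ∈ Finset.range n, x ^ i * y ^ (n - 1 - i)‖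
      ≤ ∑ i ∈ Finset.range n, ‖x ^ i * y ^ (n - 1 - i)‖ := norm_sum_le _ _
    _ ≤ ∑ i ∈ Finset.range n, M ^ (n - 1) := by
        refine Finset.sum_le_sum fun i hi => ?_
        have hexp : i + (n - 1 - i) = n - 1 := by have := Finset.mem_range.1 hi; omega
        calc ‖x ^ i * y ^ (n - 1 - i)‖ ≤ ‖x‖ ^ i * ‖y‖ ^ (n - 1 - i) :=
              (norm_mul_le _ _).trans (mul_le_mul (norm_pow_le _ _) (norm_pow_le _ _)
                (norm_nonneg _) (by positivity))
          _ ≤ M ^ i * M ^ (n - 1 - i) := by gcongr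
          _ = M ^ (n - 1) := by rw [← pow_add, hexp]
    _ = n * M ^ (n - 1) := by simp

namespace Complex

theorem norm_one_add_div_pow_sub_exp_le {z : ℂ} {n : ℕ} (hz : ‖z‖ ≤ n) :
    ‖(1 + z / n) ^ n - exp z‖ ≤ ‖z‖ ^ 2 * Real.exp ‖z‖ / n := by
  rcases Nat.eq_zero_or_pos n with rfl | hn
  · simp_all
  have hn' : (0 : ℝ) < n := by exact_mod_cast hn
  have hzn : ‖z / n‖ = ‖z‖ / n := by simp
  set M := Real.exp (‖z‖ / n)
  have hx : ‖1 + z / n‖ ≤ M := (norm_add_le _ _).trans <| by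
    rw [norm_one, hzn, add_comm]; exact Real.add_one_le_exp _
  have hy : ‖exp (z / n)‖ ≤ M := by
    rw [norm_exp]; exact Real.exp_le_exp.2 ((re_le_norm _).trans hzn.le)
  have hdiff : ‖1 + z / n - exp (z / n)‖ ≤ (‖z‖ / n) ^ 2 := by
    rw [← hzn, ← norm_neg, neg_sub, sub_add_eq_sub_sub]
    exact norm_exp_sub_one_sub_id_le (hzn ▸ (div_le_one hn').2 hz)
  have hpow : exp (z / n) ^ n = exp z := by
    rw [← exp_nat_mul, mul_div_cancel₀ _ (by exact_mod_cast hn.ne')]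
  have hMpow : M ^ (n - 1) ≤ Real.exp ‖z‖ := by
    calc M ^ (n - 1) ≤ M ^ n :=
          pow_le_pow_right₀ (Real.one_le_exp (by positivity)) (Nat.sub_le n 1)
      _ = Real.exp ‖z‖ := by rw [← Real.exp_nat_mul]; congr 1; field_simp
  calc ‖(1 + z / n) ^ n - exp z‖ ≤ n * M ^ (n - 1) * ‖1 + z / n - exp (z / n)‖ :=
        hpow ▸ norm_pow_sub_pow_le hx hy n
    _ ≤ n * Real.exp ‖z‖ * (‖z‖ / n) ^ 2 := by gcongr
    _ = ‖z‖ ^ 2 * Real.exp ‖z‖ / n := by field_simp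

theorem tendstoLocallyUniformly_one_add_div_pow_exp :
    TendstoLocallyUniformly (fun (n : ℕ) (z : ℂ) => (1 + z / n) ^ n) exp atTop := by
  refine Metric.tendstoLocallyUniformly_iff.2 fun ε hε x =>
    ⟨Metric.ball x 1, Metric.ball_mem_nhds x one_pos, ?_⟩
  set R := ‖x‖ + 1
  have hbound : Tendsto (fun n : ℕ => R ^ 2 * Real.exp R / n) atTop (nhds 0) :=
    tendsto_const_div_atTop_nhds_zero_nat _
  filter_upwards [hbound.eventually (gt_mem_nhds hε), eventually_ge_atTop ⌈R⌉₊]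
    with n hn hRn y hy
  have hyR : ‖y‖ ≤ R := by
    have := norm_le_norm_add_norm_sub' y x
    rw [← dist_eq_norm] at this
    linarith [Metric.mem_ball.1 hy]
  rw [dist_comm, dist_eq_norm]
  calc ‖(1 + y / n) ^ n - exp y‖ ≤ ‖y‖ ^ 2 * Real.exp ‖y‖ / n :=
        norm_one_add_div_pow_sub_exp_le (hyR.trans (Nat.ceil_le.1 hRn))
    _ ≤ R ^ 2 * Real.exp R / n := by gcongr
    _ < ε := hn

theorem exists_re_pos_exp_mul_eq_neg_one_iff {w : ℂ} :
    (∃ z : ℂ, 0 < z.re ∧ exp (w * z) = -1) ↔ w.im ≠ 0 := by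
  constructor
  · rintro ⟨z, hz, hexp⟩ hw
    have hre := congrArg (‖·‖) hexp
    simp only [norm_exp, norm_neg, norm_one, Real.exp_eq_one_iff, mul_re, hw, zero_mul,
      sub_zero, mul_eq_zero, hz.ne', or_false] at hre
    have hw0 : w = 0 := by simp [Complex.ext_iff, hre, hw]
    norm_num [hw0] at hexp
  · intro hw
    have hw0 : w ≠ 0 := fun h => hw (by simp [h])
    have hre : (Real.pi * I / w).re = Real.pi * w.im / normSq w := by simp [div_re]
    have hw2 := normSq_pos.2 hw0
    rcases hw.lt_or_gt with hneg | hpos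
    · refine ⟨-(Real.pi * I) / w, ?_, ?_⟩
      · rw [neg_div, neg_re, hre, ← neg_div, ← mul_neg]
        have := neg_pos.2 hneg
        positivity
      · rw [mul_div_cancel₀ _ hw0, exp_neg_pi_mul_I]
    · refine ⟨Real.pi * I / w, ?_, ?_⟩
      · rw [hre]; positivity
      · rw [mul_div_cancel₀ _ hw0, exp_pi_mul_I]

end Complex

theorem Polynomial.norm_eval_neg_le {P : ℂ[X]} (hP : ∀ z : ℂ, 0 < z.re → P.eval z ≠ 0)
    {x : ℝ} (hx : 0 ≤ x) : ‖P.eval (-x : ℂ)‖ ≤ ‖P.eval (x : ℂ)‖ := by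
  have hnorm (y : ℂ) :
      ‖P.eval y‖ = ‖P.leadingCoeff‖ * (P.roots.map fun ρ => ‖y - ρ‖).prod := by
    rw [(IsAlgClosed.splits P).eval_eq_prod_roots, norm_mul]
    exact congrArg _ <| (map_multiset_prod (normHom : ℂ →*₀ ℝ) _).trans
      (by rw [Multiset.map_map]; rfl)
  rw [hnorm, hnorm]
  refine mul_le_mul_of_nonneg_left (Multiset.prod_map_le_prod_map₀ _ _
    (fun _ _ => norm_nonneg _) fun ρ hρ => ?_) (norm_nonneg _)
  have hρ : ρ.re ≤ 0 := not_lt.1 fun h => hP ρ h (isRoot_of_mem_roots hρ)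
  simp only [Complex.norm_def]
  refine Real.sqrt_le_sqrt ?_
  simp only [normSq_apply, sub_re, neg_re, ofReal_re, sub_im, neg_im, ofReal_im, neg_zero,
    zero_sub, mul_neg, neg_mul, neg_neg, add_le_add_iff_right]
  nlinarith

theorem add_mul_pow_add_ne_zero {a b z : ℂ} (him : (a - b).im = 0) (hre : 0 ≤ (a + b).re)
    (hz : 0 < z.re) {r : ℝ} (hr : 0 < r) {n : ℕ} (hn : n ≠ 0) :
    (r + a * z) ^ n + (r + b * z) ^ n ≠ 0 := by
  intro h
  set u := r + a * z
  set v := r + b * z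
  have hbim : b.im = a.im := by rw [sub_im, sub_eq_zero] at him; exact him.symm
  have hS : 0 < (conj z * (u + v)).re := by
    have hz2 : 0 < normSq z := normSq_pos.2 fun h => by simp [h] at hz
    have hab : 0 ≤ a.re + b.re := by simpa using hre
    simp only [normSq_apply] at hz2
    simp only [mul_re, conj_re, add_re, ofReal_re, conj_im, add_im, ofReal_im, mul_im, zero_add,
      neg_mul, sub_neg_eq_add, u, v]
    nlinarith [mul_nonneg hab hz2.le, mul_pos hr hz]
  have hnorm : ‖u‖ = ‖v‖ := by
    have := congrArg (‖·‖) (eq_neg_of_add_eq_zero_left h)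
    simp only [norm_pow, norm_neg] at this
    exact (pow_left_inj₀ (norm_nonneg _) (norm_nonneg _) hn).1 this
  have hsq : normSq u - normSq v = (a - b).re * (conj z * (u + v)).re := by
    simp only [normSq_apply, add_re, ofReal_re, mul_re, add_im, ofReal_im, mul_im, zero_add, hbim,
      sub_re, conj_re, conj_im, neg_mul, sub_neg_eq_add, u, v]
    ring
  have hab : a = b := by
    rw [normSq_eq_norm_sq, normSq_eq_norm_sq, hnorm, sub_self, eq_comm, mul_eq_zero] at hsq
    exact sub_eq_zero.1 (Complex.ext (hsq.resolve_right hS.ne') him)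
  have huv : u = v := by simp [u, v, hab]
  have hu : u = 0 := by
    rw [← huv, ← two_mul, mul_eq_zero] at h
    exact pow_eq_zero_iff hn |>.1 (h.resolve_left two_ne_zero)
  simp [← huv, hu] at hS

theorem InLY.norm_apply_neg_le {f : ℂ → ℂ} (hf : InLY f) {x : ℝ} (hx : 0 ≤ x) :
    ‖f (-x)‖ ≤ ‖f x‖ := by
  obtain ⟨P, hP, hlim⟩ := hf
  have hlim' := hlim.tendstoLocallyUniformlyOn (s := Set.univ)
  exact le_of_tendsto_of_tendsto' (hlim'.tendsto_at (Set.mem_univ _)).norm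
    (hlim'.tendsto_at (Set.mem_univ _)).norm fun k => (P k).norm_eval_neg_le (hP k) hx

def twoPointApprox (a b : ℂ) (n : ℕ) : ℂ[X] :=
  C 2⁻¹ * ((1 + C (a / n) * X) ^ n + (1 + C (b / n) * X) ^ n)

theorem eval_twoPointApprox (a b z : ℂ) (n : ℕ) :
    (twoPointApprox a b n).eval z = ((1 + a * z / n) ^ n + (1 + b * z / n) ^ n) / 2 := by
  simp only [twoPointApprox, eval_mul, eval_C, eval_add, eval_pow, eval_one, eval_X,
    div_mul_eq_mul_div]
  ring

theorem eval_twoPointApprox_ne_zero {a b z : ℂ} (him : (a - b).im = 0) (hre : 0 ≤ (a + b).re)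
    (hz : 0 < z.re) (n : ℕ) : (twoPointApprox a b n).eval z ≠ 0 := by
  rw [eval_twoPointApprox]
  rcases eq_or_ne n 0 with rfl | hn
  · norm_num
  have hn' : (n : ℂ) ≠ 0 := Nat.cast_ne_zero.2 hn
  have hscale : (1 + a * z / n) ^ n + (1 + b * z / n) ^ n
      = (((n : ℝ) + a * z) ^ n + ((n : ℝ) + b * z) ^ n) / (n : ℂ) ^ n := by
    rw [eq_div_iff (pow_ne_zero _ hn'), add_mul, ← mul_pow, ← mul_pow]
    push_cast
    congr 2 <;> field_simp
  rw [hscale]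
  exact div_ne_zero (div_ne_zero (add_mul_pow_add_ne_zero him hre hz
    (Nat.cast_pos.2 (Nat.pos_of_ne_zero hn)) hn) (pow_ne_zero _ hn')) two_ne_zero

theorem tendstoLocallyUniformly_eval_twoPointApprox (a b : ℂ) :
    TendstoLocallyUniformly (fun n z => (twoPointApprox a b n).eval z)
      (fun z => (exp (a * z) + exp (b * z)) / 2) atTop := by
  have hexp (c : ℂ) := Complex.tendstoLocallyUniformly_one_add_div_pow_exp.comp (c * ·)
    (continuous_const_mul c)
  simp only [eval_twoPointApprox]
  exact (uniformContinuous_div_const' 2).comp_tendstoLocallyUniformly ((hexp a).add (hexp b))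

theorem inLY_twoPoint {a b : ℂ} (him : (a - b).im = 0) (hre : 0 ≤ (a + b).re) :
    InLY fun z => (exp (a * z) + exp (b * z)) / 2 :=
  ⟨twoPointApprox a b, fun n _ hz => eval_twoPointApprox_ne_zero him hre hz n,
    tendstoLocallyUniformly_eval_twoPointApprox a b⟩

theorem forall_re_pos_exp_add_exp_ne_zero_iff {a b : ℂ} :
    (∀ z : ℂ, 0 < z.re → (exp (a * z) + exp (b * z)) / 2 ≠ 0) ↔ (a - b).im = 0 := by
  rw [← not_iff_not, ← ne_eq, ← Complex.exists_re_pos_exp_mul_eq_neg_one_iff]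
  push Not
  refine exists_congr fun z => and_congr_right fun _ => ?_
  rw [div_eq_zero_iff, or_iff_left two_ne_zero, sub_mul, exp_sub, div_eq_iff (exp_ne_zero _),
    neg_one_mul, add_eq_zero_iff_eq_neg]

theorem re_add_nonneg_of_inLY {a b : ℂ} (him : (a - b).im = 0)
    (h : InLY fun z => (exp (a * z) + exp (b * z)) / 2) : 0 ≤ (a + b).re := by
  set f := fun z : ℂ => (exp (a * z) + exp (b * z)) / 2
  have hf1 : f 1 ≠ 0 := forall_re_pos_exp_add_exp_ne_zero_iff.2 him 1 (by simp)
  have hsymm : f (-1) = exp (-(a + b)) * f 1 := by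
    simp only [f, mul_div_assoc', mul_add, ← exp_add]
    rw [add_comm (exp (a * -1))]
    congr 3 <;> ring
  have hle := h.norm_apply_neg_le zero_le_one
  push_cast at hle
  rw [hsymm, norm_mul, norm_exp, mul_le_iff_le_one_left (norm_pos_iff.2 hf1),
    Real.exp_le_one_iff, neg_re] at hle
  linarith

/-- For `μ = (δ_a + δ_b)/2` with `a, b ∈ ℂ`:
`μ̂(z) = exp(((a+b)/2)z) cosh(((a-b)/2)z)`, and `μ̂` is nonvanishing on the open
right half-plane and a locally uniform limit of polynomials nonvanishing there
if and only if `a - b ∈ ℝ` and `Re(a+b) ≥ 0`. -/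
theorem stmt_13 (a b : ℂ)
    (μhat : ℂ → ℂ) (hμ : ∀ z, μhat z = (Complex.exp (a * z) + Complex.exp (b * z)) / 2) :
    (∀ z : ℂ, μhat z = Complex.exp (((a + b) / 2) * z) * Complex.cosh (((a - b) / 2) * z)) ∧
    (((∀ z : ℂ, 0 < z.re → μhat z ≠ 0) ∧ InLY μhat) ↔
      ((a - b).im = 0 ∧ 0 ≤ (a + b).re)) := by
  obtain rfl : μhat = fun z => (exp (a * z) + exp (b * z)) / 2 := funext hμ
  refine ⟨fun z => ?_, ?_⟩
  · rw [cosh, mul_div_assoc', mul_add, ← exp_add, ← exp_add]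
    ring_nf
  rw [forall_re_pos_exp_add_exp_ne_zero_iff]
  exact ⟨fun ⟨him, hLY⟩ => ⟨him, re_add_nonneg_of_inLY him hLY⟩,
    fun ⟨him, hre⟩ => ⟨him, inLY_twoPoint him hre⟩⟩
end
end

section
/- Let α, γ ∈ (0,∞)^n and let g be an entire function on ℂ^n with M_α(g) := sup_z exp(−∑_j α_j|z_j|²/2)|g(z)| < ∞. Then the multiplication operator f ↦ g·f is a bounded linear operator from F_γ to F_{α+γ} with ‖g f‖²_{α+γ} ≤ ∏_{j=1}^n (1 + α_j/γ_j) · M_α(g)² · ‖f‖²_γ. -/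
open scoped BigOperators
open Complex MeasureTheory

/-! Pointwise, `|g z|² e^{-∑ α_j|z_j|²} ≤ M_α(g)²`, so the weight `e^{-∑ (α_j+γ_j)|z_j|²}` of
`F_{α+γ}` absorbs `|g|²` and leaves the weight of `F_γ`; the normalising constants differ by
`∏ (α_j + γ_j) / ∏ γ_j = ∏ (1 + α_j/γ_j)`. Integrating the pointwise bound gives the estimate. -/

theorem Finset.prod_add_eq_prod_one_add_div_mul_prod {ι K : Type*} [Field K] (s : Finset ι)
    (a b : ι → K) (hb : ∀ j ∈ s, b j ≠ 0) :
    ∏ j ∈ s, (a j + b j) = (∏ j ∈ s, (1 + a j / b j)) * ∏ j ∈ s, b j := by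
  rw [← Finset.prod_mul_distrib]
  refine Finset.prod_congr rfl fun j hj => ?_
  field_simp [hb j hj]
  ring

theorem Real.exp_neg_sum_div_two_sq {ι : Type*} (s : Finset ι) (q : ι → ℝ) :
    Real.exp (-∑ j ∈ s, q j / 2) ^ 2 = Real.exp (-∑ j ∈ s, q j) := by
  rw [sq, ← Real.exp_add, ← Finset.sum_div]
  ring_nf

theorem Finset.prod_one_add_div_nonneg {ι : Type*} (s : Finset ι) {a b : ι → ℝ}
    (ha : ∀ j ∈ s, 0 ≤ a j) (hb : ∀ j ∈ s, 0 ≤ b j) : 0 ≤ ∏ j ∈ s, (1 + a j / b j) :=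
  Finset.prod_nonneg fun j hj => by have := ha j hj; have := hb j hj; positivity

theorem sq_le_sSup_range_sq {X : Type*} {φ : X → ℝ} (hφ : BddAbove (Set.range φ))
    (h0 : ∀ x, 0 ≤ φ x) (x : X) : φ x ^ 2 ≤ sSup (Set.range φ) ^ 2 :=
  pow_le_pow_left₀ (h0 x) (le_csSup hφ ⟨x, rfl⟩) 2

theorem norm_mul_sq_mul_exp_le {ι : Type*} [Fintype ι] (α γ : ι → ℝ) (hα : ∀ j, 0 ≤ α j)
    (hγ : ∀ j, 0 < γ j) (c : ℝ) (hc : 0 ≤ c) (z : ι → ℂ) (u v : ℂ) {M : ℝ}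
    (hu : ‖u‖ ^ 2 * Real.exp (-∑ j, α j * ‖z j‖ ^ 2) ≤ M ^ 2) :
    (∏ j, (α j + γ j)) / c * (‖u * v‖ ^ 2 * Real.exp (-∑ j, (α j + γ j) * ‖z j‖ ^ 2)) ≤
      (∏ j, (1 + α j / γ j)) * M ^ 2 *
        ((∏ j, γ j) / c * (‖v‖ ^ 2 * Real.exp (-∑ j, γ j * ‖z j‖ ^ 2))) := by
  have hprod := Finset.univ.prod_add_eq_prod_one_add_div_mul_prod α γ fun j _ => (hγ j).ne'
  have hexp : Real.exp (-∑ j, (α j + γ j) * ‖z j‖ ^ 2) =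
      Real.exp (-∑ j, α j * ‖z j‖ ^ 2) * Real.exp (-∑ j, γ j * ‖z j‖ ^ 2) := by
    simp only [add_mul, Finset.sum_add_distrib, neg_add, Real.exp_add]
  have hP := Finset.univ.prod_one_add_div_nonneg (fun j _ => hα j) fun j _ => (hγ j).le
  have hG : 0 ≤ ∏ j, γ j := Finset.prod_nonneg fun j _ => (hγ j).le
  set F := (∏ j, (1 + α j / γ j)) * (∏ j, γ j) / c * (‖v‖ ^ 2 * Real.exp (-∑ j, γ j * ‖z j‖ ^ 2))
  have hF : 0 ≤ F := by positivity
  calc _ = F * (‖u‖ ^ 2 * Real.exp (-∑ j, α j * ‖z j‖ ^ 2)) := by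
          rw [hprod, hexp, norm_mul, mul_pow]; ring
    _ ≤ F * M ^ 2 := mul_le_mul_of_nonneg_left hu hF
    _ = _ := by ring

theorem stmt_17_general {n : ℕ} (α γ : Fin n → ℝ) (hα : ∀ j, 0 < α j) (hγ : ∀ j, 0 < γ j)
    (g : (Fin n → ℂ) → ℂ)
    (hM : BddAbove (Set.range fun z : Fin n → ℂ =>
      Real.exp (-∑ j, α j * ‖z j‖ ^ 2 / 2) * ‖g z‖))
    (f : (Fin n → ℂ) → ℂ) :
    ∫⁻ z : Fin n → ℂ,
        ENNReal.ofReal (((∏ j, (α j + γ j)) / Real.pi ^ n) *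
          (‖g z * f z‖ ^ 2 * Real.exp (-∑ j, (α j + γ j) * ‖z j‖ ^ 2))) ≤
      ENNReal.ofReal ((∏ j, (1 + α j / γ j)) *
          (sSup (Set.range fun z : Fin n → ℂ =>
            Real.exp (-∑ j, α j * ‖z j‖ ^ 2 / 2) * ‖g z‖)) ^ 2) *
        ∫⁻ z : Fin n → ℂ,
          ENNReal.ofReal (((∏ j, γ j) / Real.pi ^ n) *
            (‖f z‖ ^ 2 * Real.exp (-∑ j, γ j * ‖z j‖ ^ 2))) := by
  have hgM : ∀ z : Fin n → ℂ, ‖g z‖ ^ 2 * Real.exp (-∑ j, α j * ‖z j‖ ^ 2) ≤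
      sSup (Set.range fun z : Fin n → ℂ => Real.exp (-∑ j, α j * ‖z j‖ ^ 2 / 2) * ‖g z‖) ^ 2 := by
    intro z
    rw [mul_comm, ← Real.exp_neg_sum_div_two_sq, ← mul_pow]
    exact sq_le_sSup_range_sq hM (fun _ => by positivity) z
  have hP := Finset.univ.prod_one_add_div_nonneg (fun j _ => (hα j).le) fun j _ => (hγ j).le
  rw [← lintegral_const_mul' _ _ ENNReal.ofReal_ne_top]
  refine lintegral_mono fun z => ?_
  rw [← ENNReal.ofReal_mul (by positivity)]
  exact ENNReal.ofReal_le_ofReal <| norm_mul_sq_mul_exp_le α γ (fun j => (hα j).le) hγ _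
    (by positivity) z (g z) (f z) (hgM z)

/-- Let `g` be entire on `ℂⁿ` with
`M_α(g) = sup_z exp(-∑ α_j|z_j|²/2)|g(z)| < ∞`. Then multiplication by `g`
is bounded from `F_γ` to `F_{α+γ}`:
`‖gf‖²_{α+γ} ≤ ∏(1+α_j/γ_j) · M_α(g)² · ‖f‖²_γ` (integral norms). -/
theorem stmt_17 {n : ℕ} (α γ : Fin n → ℝ) (hα : ∀ j, 0 < α j) (hγ : ∀ j, 0 < γ j)
    (g : (Fin n → ℂ) → ℂ) (hg : Differentiable ℂ g)
    (hM : BddAbove (Set.range fun z : Fin n → ℂ =>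
      Real.exp (-∑ j, α j * ‖z j‖ ^ 2 / 2) * ‖g z‖))
    (f : (Fin n → ℂ) → ℂ) (hfe : Differentiable ℂ f) :
    ∫⁻ z : Fin n → ℂ,
        ENNReal.ofReal (((∏ j, (α j + γ j)) / Real.pi ^ n) *
          (‖g z * f z‖ ^ 2 * Real.exp (-∑ j, (α j + γ j) * ‖z j‖ ^ 2))) ≤
      ENNReal.ofReal ((∏ j, (1 + α j / γ j)) *
          (sSup (Set.range fun z : Fin n → ℂ =>
            Real.exp (-∑ j, α j * ‖z j‖ ^ 2 / 2) * ‖g z‖)) ^ 2) *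
        ∫⁻ z : Fin n → ℂ,
          ENNReal.ofReal (((∏ j, γ j) / Real.pi ^ n) *
            (‖f z‖ ^ 2 * Real.exp (-∑ j, γ j * ‖z j‖ ^ 2))) :=
  stmt_17_general α γ hα hγ g hM f
end

section
/- For a, s, and complex z, w: 2a|z||w| ≤ (1/s)|w|² + a²s|z|² for all real a ≥ 0 and s > 0. Consequently, for a multiplier-sequence symbol G(z,w) = C z^n w^n e^{azw} ∏_{j<ω}(1 + x_j z w) with C ∈ ℝ, a ≥ 0, x_j > 0, ∑_j x_j < ∞, one has G ∈ F_{(β,γ)} (two-variable Bargmann–Fock space) for all β > a²s and γ > 1/s, for each s > 0. -/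
/-!
The symbol is `C · g(zw)` with `g(u) = uᴺ e^{au} ∏ⱼ (1 + xⱼ u)`, and `g` has exponential type
`|a|`: the infinite product has type zero, because after splitting off finitely many factors,
which are polynomial, the remaining tail is bounded by `exp (|u| ∑_{j ≥ M} |xⱼ|)` with an
arbitrarily small sum. So `|g(u)| ≤ K e^{b|u|}` for any `b > |a|`; taking `b² s < β`, the bound
`2b|z||w| ≤ |w|²/s + b² s |z|²` dominates `|G|² e^{-β|z|² - γ|w|²}` by a product of Gaussians.
-/

open Complex MeasureTheory Filter

theorem two_mul_mul_mul_le_of_pos (a r t : ℝ) {s : ℝ} (hs : 0 < s) :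
    2 * a * r * t ≤ 1 / s * t ^ 2 + a ^ 2 * s * r ^ 2 := by
  have key : 0 ≤ (t - a * s * r) ^ 2 / s := by positivity
  have expand : (t - a * s * r) ^ 2 / s = 1 / s * t ^ 2 + a ^ 2 * s * r ^ 2 - 2 * a * r * t := by
    field_simp
    ring
  linarith

theorem norm_tprod_one_add_le_exp_tsum {ι R : Type*} [NormedCommRing R] [NormOneClass R]
    [CompleteSpace R] {f : ι → R} (hf : Summable (‖f ·‖)) :
    ‖∏' i, (1 + f i)‖ ≤ Real.exp (∑' i, ‖f i‖) := by
  refine le_of_tendsto' ((continuous_norm.tendsto _).comp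
    (multipliable_one_add_of_summable hf).hasProd) fun s => ?_
  calc ‖∏ i ∈ s, (1 + f i)‖ ≤ ∏ i ∈ s, (1 + ‖f i‖) :=
        (s.norm_prod_le _).trans <| Finset.prod_le_prod (fun _ _ => norm_nonneg _)
          fun i _ => (norm_add_le _ _).trans_eq (by rw [norm_one])
    _ ≤ Real.exp (∑ i ∈ s, ‖f i‖) := Real.prod_one_add_le_exp_sum _ fun _ => norm_nonneg _
    _ ≤ Real.exp (∑' i, ‖f i‖) :=
        Real.exp_le_exp.mpr (hf.sum_le_tsum _ fun _ _ => norm_nonneg _)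

section Gaussian

variable {V W : Type*} [NormedAddCommGroup V] [InnerProductSpace ℝ V] [FiniteDimensional ℝ V]
  [MeasurableSpace V] [BorelSpace V] [NormedAddCommGroup W] [InnerProductSpace ℝ W]
  [FiniteDimensional ℝ W] [MeasurableSpace W] [BorelSpace W]

theorem integrable_exp_neg_mul_sq_norm {c : ℝ} (hc : 0 < c) :
    Integrable (fun v : V => Real.exp (-c * ‖v‖ ^ 2)) := by
  have h := (GaussianFourier.integrable_cexp_neg_mul_sq_norm_add (V := V) (b := c)
    (by simpa using hc) 0 0).norm
  refine h.congr (Eventually.of_forall fun v => ?_)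
  simp [Complex.norm_exp, ← Complex.ofReal_pow]

theorem integrable_exp_two_mul_mul_norm_sub {b s β γ : ℝ} (hs : 0 < s) (hβ : b ^ 2 * s < β)
    (hγ : 1 / s < γ) :
    Integrable (fun p : V × W =>
      Real.exp (2 * b * ‖p.1‖ * ‖p.2‖ - β * ‖p.1‖ ^ 2 - γ * ‖p.2‖ ^ 2)) := by
  refine ((integrable_exp_neg_mul_sq_norm (sub_pos.mpr hβ)).mul_prod
    (integrable_exp_neg_mul_sq_norm (sub_pos.mpr hγ))).mono' (by fun_prop)
    (Eventually.of_forall fun p => ?_)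
  rw [Real.norm_of_nonneg (Real.exp_pos _).le, ← Real.exp_add, Real.exp_le_exp]
  linarith [two_mul_mul_mul_le_of_pos b ‖p.1‖ ‖p.2‖ hs]

end Gaussian

def ExpBounded (f : ℂ → ℂ) (b : ℝ) : Prop :=
  ∃ K, ∀ u, ‖f u‖ ≤ K * Real.exp (b * ‖u‖)

namespace ExpBounded

variable {f g : ℂ → ℂ} {b b' : ℝ}

theorem mono (hf : ExpBounded f b) (h : b ≤ b') : ExpBounded f b' := by
  obtain ⟨K, hK⟩ := hf
  have hK0 : 0 ≤ K := by simpa using (norm_nonneg _).trans (hK 0)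
  exact ⟨K, fun u => (hK u).trans (by gcongr)⟩

theorem mul (hf : ExpBounded f b) (hg : ExpBounded g b') :
    ExpBounded (fun u => f u * g u) (b + b') := by
  obtain ⟨K, hK⟩ := hf
  obtain ⟨L, hL⟩ := hg
  refine ⟨K * L, fun u => ?_⟩
  calc ‖f u * g u‖ ≤ ‖f u‖ * ‖g u‖ := norm_mul_le _ _
    _ ≤ K * Real.exp (b * ‖u‖) * (L * Real.exp (b' * ‖u‖)) :=
        mul_le_mul (hK u) (hL u) (norm_nonneg _) ((norm_nonneg _).trans (hK u))
    _ = K * L * Real.exp ((b + b') * ‖u‖) := by rw [add_mul, Real.exp_add]; ring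

theorem finset_prod {ι : Type*} {f : ι → ℂ → ℂ} {b : ι → ℝ} (s : Finset ι)
    (h : ∀ i ∈ s, ExpBounded (f i) (b i)) :
    ExpBounded (fun u => ∏ i ∈ s, f i u) (∑ i ∈ s, b i) := by
  classical
  induction s using Finset.induction_on with
  | empty => exact ⟨1, fun u => by simp⟩
  | insert i s hi ih =>
    simp only [Finset.prod_insert hi, Finset.sum_insert hi]
    exact (h i (s.mem_insert_self i)).mul (ih fun j hj => h j (Finset.mem_insert_of_mem hj))

end ExpBounded

theorem expBounded_cexp_mul (a : ℂ) : ExpBounded (fun u => cexp (a * u)) ‖a‖ :=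
  ⟨1, fun u => by
    rw [Complex.norm_exp, one_mul, Real.exp_le_exp, ← norm_mul]
    exact Complex.re_le_norm _⟩

theorem expBounded_pow (n : ℕ) {δ : ℝ} (hδ : 0 < δ) : ExpBounded (· ^ n) δ := by
  refine ⟨n.factorial / δ ^ n, fun u => ?_⟩
  have h := Real.pow_div_factorial_le_exp (δ * ‖u‖) (by positivity) n
  rw [div_le_iff₀ (by positivity), mul_pow] at h
  rw [norm_pow, div_mul_eq_mul_div, le_div_iff₀ (by positivity)]
  linarith

theorem expBounded_one_add_mul (y : ℂ) {δ : ℝ} (hδ : 0 < δ) :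
    ExpBounded (fun u => 1 + y * u) δ := by
  refine ⟨1 + ‖y‖ / δ, fun u => ?_⟩
  have h := Real.add_one_le_exp (δ * ‖u‖)
  calc ‖1 + y * u‖ ≤ 1 + ‖y‖ * ‖u‖ := (norm_add_le _ _).trans_eq (by rw [norm_one, norm_mul])
    _ ≤ (1 + ‖y‖ / δ) * (δ * ‖u‖ + 1) := by
        have : ‖y‖ / δ * (δ * ‖u‖) = ‖y‖ * ‖u‖ := by field_simp
        nlinarith [div_nonneg (norm_nonneg y) hδ.le, norm_nonneg u]
    _ ≤ (1 + ‖y‖ / δ) * Real.exp (δ * ‖u‖) := by gcongr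

theorem expBounded_finset_prod_one_add_mul {ι : Type*} (y : ι → ℂ) (s : Finset ι) {δ : ℝ}
    (hδ : 0 < δ) : ExpBounded (fun u => ∏ i ∈ s, (1 + y i * u)) δ := by
  have hδ' : 0 < δ / (s.card + 1) := by positivity
  refine (ExpBounded.finset_prod s fun i _ => expBounded_one_add_mul (y i) hδ').mono ?_
  rw [Finset.sum_const, nsmul_eq_mul, mul_div_assoc', div_le_iff₀ (by positivity)]
  nlinarith

theorem expBounded_tprod_one_add_mul {y : ℕ → ℂ} (hy : Summable (‖y ·‖)) :
    ExpBounded (fun u => ∏' j, (1 + y j * u)) (∑' j, ‖y j‖) :=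
  ⟨1, fun u => by
    have hyu : Summable fun j => ‖y j * u‖ := by simpa only [norm_mul] using hy.mul_right ‖u‖
    refine (norm_tprod_one_add_le_exp_tsum hyu).trans_eq ?_
    simp only [norm_mul, tsum_mul_right, one_mul]⟩

theorem expBounded_tprod_one_add_mul_of_pos {y : ℕ → ℂ} (hy : Summable (‖y ·‖)) {ε : ℝ}
    (hε : 0 < ε) : ExpBounded (fun u => ∏' j, (1 + y j * u)) ε := by
  have hsmall : ∀ᶠ M in atTop, ∑' j, ‖y (j + M)‖ < ε / 2 :=
    (tendsto_sum_nat_add fun j => ‖y j‖).eventually (gt_mem_nhds (half_pos hε))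
  obtain ⟨M, hM⟩ := hsmall.exists
  have hyM : Summable fun j => ‖y (j + M)‖ := (summable_nat_add_iff M).mpr hy
  have hsplit : (fun u => ∏' j, (1 + y j * u)) = fun u =>
      (∏ j ∈ Finset.range M, (1 + y j * u)) * ∏' j : ℕ, (1 + y (j + M) * u) := funext fun u => by
    have hyu : Summable fun j => ‖y (j + M) * u‖ := by
      simpa only [norm_mul] using hyM.mul_right ‖u‖
    exact (Multipliable.prod_mul_tprod_nat_mul' (f := fun j => 1 + y j * u)
      (_root_.multipliable_one_add_of_summable hyu)).symm
  rw [hsplit]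
  refine ((expBounded_finset_prod_one_add_mul y _ (half_pos hε)).mul
    (expBounded_tprod_one_add_mul hyM)).mono ?_
  linarith

theorem expBounded_pow_mul_cexp_mul_tprod (n : ℕ) (a : ℂ) {y : ℕ → ℂ} (hy : Summable (‖y ·‖))
    {b : ℝ} (hb : ‖a‖ < b) :
    ExpBounded (fun u => u ^ n * cexp (a * u) * ∏' j, (1 + y j * u)) b := by
  have hε : 0 < (b - ‖a‖) / 2 := by linarith
  exact (((expBounded_pow n hε).mul (expBounded_cexp_mul a)).mul
    (expBounded_tprod_one_add_mul_of_pos hy hε)).mono (by linarith)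

theorem exists_abs_lt_and_sq_mul_lt {a s β : ℝ} (hs : 0 < s) (h : a ^ 2 * s < β) :
    ∃ b, |a| < b ∧ b ^ 2 * s < β := by
  have ha : |a| < √(β / s) := (Real.lt_sqrt (abs_nonneg a)).mpr (by rwa [sq_abs, lt_div_iff₀ hs])
  obtain ⟨b, hab, hb⟩ := exists_between ha
  exact ⟨b, hab, by rwa [← lt_div_iff₀ hs, ← Real.lt_sqrt ((abs_nonneg a).trans hab.le)]⟩

theorem stmt_19_general (C : ℝ) (a : ℝ) (N : ℕ) (x : ℕ → ℝ) (hxs : Summable x) :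
    (∀ s : ℝ, 0 < s → ∀ z w : ℂ,
      2 * a * ‖z‖ * ‖w‖ ≤ (1 / s) * ‖w‖ ^ 2 + a ^ 2 * s * ‖z‖ ^ 2) ∧
    (∀ s : ℝ, 0 < s → ∀ β γ : ℝ, a ^ 2 * s < β → 1 / s < γ →
      ∫⁻ p : ℂ × ℂ,
        ENNReal.ofReal
          (‖(C : ℂ) * p.1 ^ N * p.2 ^ N * Complex.exp ((a : ℂ) * p.1 * p.2) *
              ∏' j, (1 + (x j : ℂ) * p.1 * p.2)‖ ^ 2 *
            Real.exp (-β * ‖p.1‖ ^ 2 - γ * ‖p.2‖ ^ 2)) < ⊤) := by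
  refine ⟨fun s hs z w => two_mul_mul_mul_le_of_pos a ‖z‖ ‖w‖ hs, fun s hs β γ hβ hγ => ?_⟩
  obtain ⟨b, hab, hbβ⟩ := exists_abs_lt_and_sq_mul_lt hs hβ
  obtain ⟨K, hK⟩ := expBounded_pow_mul_cexp_mul_tprod N (a : ℂ) (y := fun j => (x j : ℂ))
    (by simpa using hxs.abs) (by simpa using hab)
  refine lt_of_le_of_lt (lintegral_mono fun p => ENNReal.ofReal_le_ofReal ?_)
    (((integrable_exp_two_mul_mul_norm_sub (V := ℂ) (W := ℂ) hs hbβ hγ).const_mul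
      (C ^ 2 * K ^ 2)).lintegral_lt_top)
  obtain ⟨z, w⟩ := p
  have hG : ‖(C : ℂ) * z ^ N * w ^ N * cexp (a * z * w) * ∏' j, (1 + (x j : ℂ) * z * w)‖
      ≤ |C| * (K * Real.exp (b * (‖z‖ * ‖w‖))) := by
    calc _ = |C| * ‖(z * w) ^ N * cexp (a * (z * w)) * ∏' j, (1 + (x j : ℂ) * (z * w))‖ := by
          simp only [mul_pow, mul_assoc, norm_mul, Complex.norm_real, Real.norm_eq_abs]
      _ ≤ _ := by
          gcongr
          simpa only [norm_mul] using hK (z * w)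
  calc _ ≤ (|C| * (K * Real.exp (b * (‖z‖ * ‖w‖)))) ^ 2 *
          Real.exp (-β * ‖z‖ ^ 2 - γ * ‖w‖ ^ 2) := by gcongr
    _ = _ := by
        rw [mul_pow, mul_pow, sq_abs, ← Real.exp_nat_mul, ← mul_assoc, mul_assoc (C ^ 2 * K ^ 2),
          ← Real.exp_add]
        congr 2
        push_cast
        ring

/-- The elementary bound `2a|z||w| ≤ (1/s)|w|² + a²s|z|²` for `a ≥ 0`, `s > 0`;
consequently the multiplier-sequence symbol
`G(z,w) = C zⁿ wⁿ e^{azw} ∏_j (1 + x_j zw)` (with `C ∈ ℝ`, `a ≥ 0`, `x_j > 0`,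
`∑ x_j < ∞`) lies in `F_{(β,γ)}` for all `β > a²s`, `γ > 1/s`, for each `s > 0`. -/
theorem stmt_19 (C : ℝ) (a : ℝ) (ha : 0 ≤ a) (N : ℕ) (x : ℕ → ℝ)
    (hx : ∀ j, 0 < x j) (hxs : Summable x) :
    (∀ s : ℝ, 0 < s → ∀ z w : ℂ,
      2 * a * ‖z‖ * ‖w‖ ≤ (1 / s) * ‖w‖ ^ 2 + a ^ 2 * s * ‖z‖ ^ 2) ∧
    (∀ s : ℝ, 0 < s → ∀ β γ : ℝ, a ^ 2 * s < β → 1 / s < γ →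
      ∫⁻ p : ℂ × ℂ,
        ENNReal.ofReal
          (‖(C : ℂ) * p.1 ^ N * p.2 ^ N * Complex.exp ((a : ℂ) * p.1 * p.2) *
              ∏' j, (1 + (x j : ℂ) * p.1 * p.2)‖ ^ 2 *
            Real.exp (-β * ‖p.1‖ ^ 2 - γ * ‖p.2‖ ^ 2)) < ⊤) :=
  stmt_19_general C a N x hxs
end
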